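/- arXiv:2008.12235 — 3 statements merged into one kernel-verified Lean document; each statement's English description precedes it below -/
import Mathlib

section
/- Potential decrease under improving moves: in an assignment s, if agent i switches to a strategy s_i' that does not use any facility closed (unused) in s, and c̃_i(s_i', s_{-i}) < c̃_i(s), then Φ(s_i', s_{-i}) < Φ(s), where Φ(s) = Σ_{open f} c(f) + Φ̃(s). -/
/-!
Changing `s i` alters only row and column `i` of the pairwise disconnection costs, so by
symmetry of `dc` the double sum in `Φ̃` changes by twice the change of row `i`; the factor `1/2`
makes `Φ̃` an exact potential for `c̃`. A move to facilities already open in `s` opens nothing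
new, so the total opening cost cannot increase.
-/

open Finset
open scoped Classical

variable {A F : Type*}

/-- Agents `i` and `j` are connected in assignment `s` if they use a common facility.
(Two agents both at `none` are *not* connected, per the paper's convention.) -/
def conn (s : A → Option F) (i j : A) : Prop :=
  ∃ f, s i = some f ∧ s j = some f

/-- Agent `i`'s cost without facility prices: connection cost plus disconnection costs. -/
noncomputable def ct [Fintype A] (cc : A → Option F → ℝ) (dc : A → A → ℝ)
    (s : A → Option F) (i : A) : ℝ :=
  cc i (s i) + ∑ j ∈ Finset.univ.filter (fun j => j ≠ i ∧ ¬ conn s i j), dc i j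

/-- The potential function Φ̃: total connection cost plus disconnection cost of each
unordered disconnected pair counted once (hence the factor 1/2 on the double sum). -/
noncomputable def Phi0 [Fintype A] (cc : A → Option F → ℝ) (dc : A → A → ℝ)
    (s : A → Option F) : ℝ :=
  (∑ i, cc i (s i))
    + (1 / 2) * ∑ i, ∑ j ∈ Finset.univ.filter (fun j => j ≠ i ∧ ¬ conn s i j), dc i j

/-- Social cost with zero facility costs: each disconnected pair is counted twice. -/
noncomputable def soc [Fintype A] (cc : A → Option F → ℝ) (dc : A → A → ℝ)
    (s : A → Option F) : ℝ :=
  (∑ i, cc i (s i))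
    + ∑ i, ∑ j ∈ Finset.univ.filter (fun j => j ≠ i ∧ ¬ conn s i j), dc i j

/-- Total opening cost of the facilities open (used by some agent) in `s`. -/
noncomputable def fcost [Fintype F] (fc : F → ℝ) (s : A → Option F) : ℝ :=
  ∑ f ∈ Finset.univ.filter (fun f => ∃ i, s i = some f), fc f

/-- The potential Φ with facility costs: total opening cost of open facilities plus Φ̃. -/
noncomputable def PhiC [Fintype A] [Fintype F] (fc : F → ℝ) (cc : A → Option F → ℝ)
    (dc : A → A → ℝ) (s : A → Option F) : ℝ :=
  fcost fc s + Phi0 cc dc s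

/-- Total social cost: facility opening costs plus connection costs plus each
disconnected pair counted twice. -/
noncomputable def socC [Fintype A] [Fintype F] (fc : F → ℝ) (cc : A → Option F → ℝ)
    (dc : A → A → ℝ) (s : A → Option F) : ℝ :=
  fcost fc s + soc cc dc s

open Function

theorem Finset.sum_sum_eq_two_mul_sum_of_eq_zero {R : Type*} [Fintype A] [NonAssocSemiring R]
    (h : A → A → R) (i : A) (hsymm : ∀ a b, h a b = h b a) (hii : h i i = 0)
    (hoff : ∀ a b, a ≠ i → b ≠ i → h a b = 0) :
    ∑ a, ∑ b, h a b = 2 * ∑ b, h i b := by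
  have hsplit : ∀ a b, h a b = (if a = i then h i b else 0) + (if b = i then h i a else 0) := by
    intro a b
    by_cases ha : a = i <;> by_cases hb : b = i
    · subst ha hb; simp [hii]
    · subst ha; simp [hb]
    · subst hb; simp [ha, hsymm a]
    · simp [ha, hb, hoff a b ha hb]
  calc ∑ a, ∑ b, h a b
      = ∑ a, ∑ b, ((if a = i then h i b else 0) + (if b = i then h i a else 0)) :=
        sum_congr rfl fun a _ => sum_congr rfl fun b _ => hsplit a b
    _ = 2 * ∑ b, h i b := by
        simp only [sum_add_distrib, sum_ite_eq', sum_ite_irrel, sum_const_zero, mem_univ, if_true]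
        exact (two_mul _).symm

noncomputable def disconnCost (dc : A → A → ℝ) (u : A → Option F) (a b : A) : ℝ :=
  if b ≠ a ∧ ¬ conn u a b then dc a b else 0

theorem ct_eq_add_sum_disconnCost [Fintype A] (cc : A → Option F → ℝ) (dc : A → A → ℝ)
    (u : A → Option F) (a : A) :
    ct cc dc u a = cc a (u a) + ∑ b, disconnCost dc u a b := by
  rw [ct, sum_filter]
  rfl

theorem Phi0_eq_add_sum_disconnCost [Fintype A] (cc : A → Option F → ℝ) (dc : A → A → ℝ)
    (u : A → Option F) :
    Phi0 cc dc u = ∑ a, cc a (u a) + 1 / 2 * ∑ a, ∑ b, disconnCost dc u a b := by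
  simp only [Phi0, sum_filter]
  rfl

theorem disconnCost_comm {dc : A → A → ℝ} (hsym : ∀ a b, dc a b = dc b a) (u : A → Option F)
    (a b : A) : disconnCost dc u a b = disconnCost dc u b a := by
  have hconn : conn u a b ↔ conn u b a :=
    ⟨fun ⟨f, ha, hb⟩ => ⟨f, hb, ha⟩, fun ⟨f, hb, ha⟩ => ⟨f, ha, hb⟩⟩
  simp only [disconnCost, ne_comm, hconn, hsym a b]

theorem disconnCost_self (dc : A → A → ℝ) (u : A → Option F) (a : A) :
    disconnCost dc u a a = 0 := by
  simp [disconnCost]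

theorem disconnCost_update_of_ne [DecidableEq A] (dc : A → A → ℝ) (s : A → Option F) {i a b : A}
    (x : Option F) (ha : a ≠ i) (hb : b ≠ i) :
    disconnCost dc (update s i x) a b = disconnCost dc s a b := by
  simp [disconnCost, conn, update_of_ne ha, update_of_ne hb]

theorem Phi0_update_sub [Fintype A] [DecidableEq A] (cc : A → Option F → ℝ) {dc : A → A → ℝ}
    (hsym : ∀ a b, dc a b = dc b a) (s : A → Option F) (i : A) (x : Option F) :
    Phi0 cc dc (update s i x) - Phi0 cc dc s = ct cc dc (update s i x) i - ct cc dc s i := by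
  set t := update s i x
  have hconn : ∑ a, cc a (t a) - ∑ a, cc a (s a) = cc i (t i) - cc i (s i) := by
    rw [← sum_sub_distrib]
    exact sum_eq_single i (fun a _ ha => by simp [t, ha]) (by simp)
  have hdisconn : ∑ a, ∑ b, disconnCost dc t a b - ∑ a, ∑ b, disconnCost dc s a b
      = 2 * (∑ b, disconnCost dc t i b - ∑ b, disconnCost dc s i b) := by
    simp only [← sum_sub_distrib]
    refine sum_sum_eq_two_mul_sum_of_eq_zero _ i (fun a b => ?_) (by simp [disconnCost_self])
      (fun a b ha hb => by simp [t, disconnCost_update_of_ne, ha, hb])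
    rw [disconnCost_comm hsym, disconnCost_comm hsym s]
  rw [Phi0_eq_add_sum_disconnCost, Phi0_eq_add_sum_disconnCost, ct_eq_add_sum_disconnCost,
    ct_eq_add_sum_disconnCost]
  linear_combination hconn + 1 / 2 * hdisconn

theorem fcost_le_fcost [Fintype F] {fc : F → ℝ} (hfc : ∀ f, 0 ≤ fc f) {s t : A → Option F}
    (hst : ∀ f, (∃ j, t j = some f) → ∃ j, s j = some f) :
    fcost fc t ≤ fcost fc s :=
  sum_le_sum_of_subset_of_nonneg (fun f hf => by simpa using hst f (by simpa using hf))
    (fun f _ _ => hfc f)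

theorem fcost_update_le [Fintype F] [DecidableEq A] {fc : F → ℝ} (hfc : ∀ f, 0 ≤ fc f)
    (s : A → Option F) (i : A) {x : Option F} (hx : ∀ f, x = some f → ∃ j, s j = some f) :
    fcost fc (update s i x) ≤ fcost fc s := by
  refine fcost_le_fcost hfc fun f ⟨j, hj⟩ => ?_
  by_cases hji : j = i
  · subst hji
    exact hx f (by simpa using hj)
  · exact ⟨j, by simpa [hji] using hj⟩

theorem potential_decreases_general [Fintype A] [Fintype F] [DecidableEq A]
    (fc : F → ℝ) (cc : A → Option F → ℝ) (dc : A → A → ℝ)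
    (hfc : ∀ f, 0 ≤ fc f)
    (hsym : ∀ i j, dc i j = dc j i)
    (s : A → Option F) (i : A) (s' : Option F)
    (hopen : ∀ f, s' = some f → ∃ j, s j = some f)
    (himp : ct cc dc (Function.update s i s') i < ct cc dc s i) :
    PhiC fc cc dc (Function.update s i s') < PhiC fc cc dc s := by
  have hfcost := fcost_update_le hfc s i hopen
  have hPhi0 := Phi0_update_sub cc hsym s i s'
  rw [PhiC, PhiC]
  linarith

/-- if agent `i` deviates to a strategy `s'` using no facility that is
closed in `s` and strictly decreases its cost `c̃_i`, then the potential
`Φ(s) = Σ_{open f} c(f) + Φ̃(s)` strictly decreases. -/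
theorem potential_decreases [Fintype A] [Fintype F] [DecidableEq A]
    (fc : F → ℝ) (cc : A → Option F → ℝ) (dc : A → A → ℝ)
    (hfc : ∀ f, 0 ≤ fc f) (hcc : ∀ i o, 0 ≤ cc i o)
    (hdc : ∀ i j, 0 ≤ dc i j) (hsym : ∀ i j, dc i j = dc j i)
    (s : A → Option F) (i : A) (s' : Option F)
    (hopen : ∀ f, s' = some f → ∃ j, s j = some f)
    (himp : ct cc dc (Function.update s i s') i < ct cc dc s i) :
    PhiC fc cc dc (Function.update s i s') < PhiC fc cc dc s :=
  potential_decreases_general fc cc dc hfc hsym s i s' hopen himp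
end

section
/- Facility-closing decreases the potential: let s be an assignment in which every agent is stable ignoring facility costs, and let f_k be an open facility with c(f_k) > Σ_{i: s_i = f_k} Q_i(s). Let s' be obtained from s by letting every agent i with s_i = f_k simultaneously switch to nBR_i(s) (which does not use f_k and uses no facility closed in s). Then Φ(s') < Φ(s), where Φ(s) = Σ_{open f} c(f) + Σ_i cc(i,s_i) + Σ_{(i,j): s_i≠s_j} dc(i,j). -/
/-! Closing `fk` saves `c(fk)`, since every agent at `fk` moves to a facility other than `fk`
that is already open. Pairs of agents away from `fk` keep their status, and a pair with exactly
one agent `i` at `fk` changes its status exactly as in `i`'s unilateral deviation to `nBR_i(s)`.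
A pair of agents both at `fk` adds at most `dc(i,j)` to `Φ̃`, which is counted once in
`Q_i(s)` and once in `Q_j(s)`. Hence `Φ̃(s') − Φ̃(s) ≤ Σ_{i : s_i = fk} Q_i(s) < c(fk)`. -/

open Finset
open scoped Classical

variable {A F : Type*}

noncomputable def discCost (dc : A → A → ℝ) (σ : A → Option F) (i j : A) : ℝ :=
  if j ≠ i ∧ ¬ conn σ i j then dc i j else 0

noncomputable def relocate (s : A → Option F) (fk : F) (t : A → Option F) : A → Option F :=
  fun i => if s i = some fk then t i else s i

section discCost

variable (dc : A → A → ℝ)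

lemma conn_comm {s : A → Option F} {i j : A} : conn s i j ↔ conn s j i :=
  ⟨fun ⟨f, h1, h2⟩ => ⟨f, h2, h1⟩, fun ⟨f, h1, h2⟩ => ⟨f, h2, h1⟩⟩

lemma discCost_comm (hsym : ∀ i j, dc i j = dc j i) (σ : A → Option F) (i j : A) :
    discCost dc σ i j = discCost dc σ j i := by
  simp only [discCost, hsym i j, ne_comm, conn_comm]

lemma discCost_self (σ : A → Option F) (i : A) : discCost dc σ i i = 0 :=
  if_neg fun hii => hii.1 rfl

lemma discCost_of_conn {σ : A → Option F} {i j : A} (h : conn σ i j) :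
    discCost dc σ i j = 0 :=
  if_neg fun hij => hij.2 h

lemma discCost_nonneg (hdc : ∀ i j, 0 ≤ dc i j) (σ : A → Option F) (i j : A) :
    0 ≤ discCost dc σ i j := by
  unfold discCost
  split_ifs
  exacts [hdc i j, le_rfl]

lemma discCost_le_of_not_conn (hdc : ∀ i j, 0 ≤ dc i j) {σ τ : A → Option F} {i j : A}
    (h : ¬ conn τ i j) : discCost dc σ i j ≤ discCost dc τ i j := by
  unfold discCost
  split_ifs <;> first | exact le_rfl | exact hdc i j | tauto

lemma discCost_congr {σ τ : A → Option F} {i j : A} (hi : σ i = τ i) (hj : σ j = τ j) :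
    discCost dc σ i j = discCost dc τ i j := by
  have hconn : conn σ i j ↔ conn τ i j := by rw [conn, conn, hi, hj]
  simp only [discCost, hconn]

lemma ct_eq_add_sum_discCost [Fintype A] (cc : A → Option F → ℝ) (σ : A → Option F) (i : A) :
    ct cc dc σ i = cc i (σ i) + ∑ j, discCost dc σ i j := by
  simp only [ct, discCost, Finset.sum_filter]

lemma Phi0_eq_add_half_sum_discCost [Fintype A] (cc : A → Option F → ℝ) (σ : A → Option F) :
    Phi0 cc dc σ = ∑ i, cc i (σ i) + 1 / 2 * ∑ i, ∑ j, discCost dc σ i j := by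
  simp only [Phi0, discCost, Finset.sum_filter]

end discCost

section relocate

variable {s t : A → Option F} {fk : F} {i : A}

lemma relocate_of_eq (hi : s i = some fk) : relocate s fk t i = t i := if_pos hi

lemma relocate_of_ne (hi : s i ≠ some fk) : relocate s fk t i = s i := if_neg hi

lemma ne_and_used_of_relocate_eq_some (hne : ∀ i, s i = some fk → t i ≠ some fk)
    (hopen : ∀ i f, t i = some f → ∃ j, s j = some f) {f : F}
    (hf : relocate s fk t i = some f) : f ≠ fk ∧ ∃ j, s j = some f := by
  by_cases hi : s i = some fk
  · rw [relocate_of_eq hi] at hf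
    exact ⟨fun h => hne i hi (h ▸ hf), hopen i f hf⟩
  · rw [relocate_of_ne hi] at hf
    exact ⟨fun h => hi (h ▸ hf), i, hf⟩

lemma fcost_add_le [Fintype F] (fc : F → ℝ) (hfc : ∀ f, 0 ≤ fc f)
    (hfk : ∃ i, s i = some fk)
    (hsub : ∀ f, (∃ i, t i = some f) → f ≠ fk ∧ ∃ i, s i = some f) :
    fcost fc t + fc fk ≤ fcost fc s := by
  have hmem : fk ∈ univ.filter (fun f => ∃ i, s i = some f) := by simpa using hfk
  rw [fcost, fcost, ← Finset.sum_erase_add _ _ hmem]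
  gcongr
  · exact fun f _ _ => hfc f
  · intro f hf
    simp only [Finset.mem_filter, Finset.mem_univ, true_and, Finset.mem_erase] at hf ⊢
    exact hsub f hf

lemma fcost_relocate_add_le [Fintype F] (fc : F → ℝ) (hfc : ∀ f, 0 ≤ fc f)
    (hne : ∀ i, s i = some fk → t i ≠ some fk)
    (hopen : ∀ i f, t i = some f → ∃ j, s j = some f) (hfk : ∃ i, s i = some fk) :
    fcost fc (relocate s fk t) + fc fk ≤ fcost fc s :=
  fcost_add_le fc hfc hfk fun _ ⟨_, hf⟩ => ne_and_used_of_relocate_eq_some hne hopen hf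

lemma sum_cc_relocate [Fintype A] (cc : A → Option F → ℝ) :
    ∑ i, cc i (relocate s fk t i) = ∑ i, cc i (s i) +
      ∑ i ∈ univ.filter (fun i => s i = some fk), (cc i (t i) - cc i (s i)) := by
  rw [Finset.sum_filter, ← Finset.sum_add_distrib]
  refine Finset.sum_congr rfl fun i _ => ?_
  by_cases hi : s i = some fk
  · rw [relocate_of_eq hi, if_pos hi, add_sub_cancel]
  · rw [relocate_of_ne hi, if_neg hi, add_zero]

variable [DecidableEq A] (dc : A → A → ℝ)

lemma discCost_relocate_of_eq_of_ne {j : A} (hi : s i = some fk) (hj : s j ≠ some fk) :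
    discCost dc (relocate s fk t) i j = discCost dc (Function.update s i (t i)) i j := by
  have hji : j ≠ i := by rintro rfl; exact hj hi
  apply discCost_congr
  · rw [relocate_of_eq hi, Function.update_self]
  · rw [relocate_of_ne hj, Function.update_of_ne hji]

/-- The pairwise form of `Φ̃(s') − Φ̃(s) ≤ Σ_{i : s_i = fk} Q_i(s)`. -/
lemma discCost_relocate_sub_le (hdc : ∀ i j, 0 ≤ dc i j) (hsym : ∀ i j, dc i j = dc j i)
    (hne : ∀ i, s i = some fk → t i ≠ some fk) (i j : A) :
    discCost dc (relocate s fk t) i j - discCost dc s i j ≤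
      (if s i = some fk then
        discCost dc (Function.update s i (t i)) i j - discCost dc s i j else 0) +
      (if s j = some fk then
        discCost dc (Function.update s j (t j)) j i - discCost dc s j i else 0) := by
  by_cases hi : s i = some fk <;> by_cases hj : s j = some fk <;> simp only [hi, hj, if_true,
    if_false, add_zero, zero_add]
  · by_cases hji : j = i
    · subst hji
      simp only [discCost_self, sub_self, add_zero, le_refl]
    have hs : conn s i j := ⟨fk, hi, hj⟩
    have hu : ¬ conn (Function.update s i (t i)) i j := by
      rintro ⟨f, hfi, hfj⟩
      rw [Function.update_self] at hfi
      rw [Function.update_of_ne hji, hj, Option.some_inj] at hfj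
      exact hne i hi (hfj ▸ hfi)
    rw [discCost_of_conn dc hs, discCost_of_conn dc (conn_comm.mp hs)]
    linarith [discCost_le_of_not_conn dc hdc (σ := relocate s fk t) hu,
      discCost_nonneg dc hdc (Function.update s j (t j)) j i]
  · rw [discCost_relocate_of_eq_of_ne dc hi hj]
  · rw [discCost_comm dc hsym _ i j, discCost_comm dc hsym s i j,
      discCost_relocate_of_eq_of_ne dc hj hi]
  · rw [discCost_congr dc (relocate_of_ne hi) (relocate_of_ne hj), sub_self]

lemma sum_discCost_relocate_le [Fintype A] (hdc : ∀ i j, 0 ≤ dc i j)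
    (hsym : ∀ i j, dc i j = dc j i) (hne : ∀ i, s i = some fk → t i ≠ some fk) :
    ∑ i, ∑ j, discCost dc (relocate s fk t) i j ≤ ∑ i, ∑ j, discCost dc s i j +
      2 * ∑ i ∈ univ.filter (fun i => s i = some fk),
        (∑ j, discCost dc (Function.update s i (t i)) i j - ∑ j, discCost dc s i j) := by
  set g : A → A → ℝ := fun i j => if s i = some fk then
    discCost dc (Function.update s i (t i)) i j - discCost dc s i j else 0
  have hpair : ∑ i, ∑ j, (discCost dc (relocate s fk t) i j - discCost dc s i j) ≤
      ∑ i, ∑ j, (g i j + g j i) := by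
    gcongr with i _ j _
    exact discCost_relocate_sub_le dc hdc hsym hne i j
  have hg : ∑ i, ∑ j, g i j = ∑ i ∈ univ.filter (fun i => s i = some fk),
      (∑ j, discCost dc (Function.update s i (t i)) i j - ∑ j, discCost dc s i j) := by
    rw [Finset.sum_filter]
    refine Finset.sum_congr rfl fun i _ => ?_
    split_ifs <;> simp [g, *, Finset.sum_sub_distrib]
  simp only [Finset.sum_add_distrib, Finset.sum_sub_distrib] at hpair
  rw [Finset.sum_comm (f := fun i j => g j i), hg] at hpair
  linarith

lemma Phi0_relocate_le [Fintype A] (cc : A → Option F → ℝ) (hdc : ∀ i j, 0 ≤ dc i j)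
    (hsym : ∀ i j, dc i j = dc j i) (hne : ∀ i, s i = some fk → t i ≠ some fk) :
    Phi0 cc dc (relocate s fk t) ≤ Phi0 cc dc s +
      ∑ i ∈ univ.filter (fun i => s i = some fk),
        (ct cc dc (Function.update s i (t i)) i - ct cc dc s i) := by
  have hQ : ∀ i, ct cc dc (Function.update s i (t i)) i - ct cc dc s i =
      (cc i (t i) - cc i (s i)) +
        (∑ j, discCost dc (Function.update s i (t i)) i j - ∑ j, discCost dc s i j) := by
    intro i
    rw [ct_eq_add_sum_discCost, ct_eq_add_sum_discCost, Function.update_self]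
    ring
  simp only [Phi0_eq_add_half_sum_discCost, hQ, Finset.sum_add_distrib, sum_cc_relocate]
  linarith [sum_discCost_relocate_le dc hdc hsym hne]

end relocate

theorem closing_decreases_potential_general [Fintype A] [Fintype F] [DecidableEq A]
    (fc : F → ℝ) (cc : A → Option F → ℝ) (dc : A → A → ℝ)
    (hfc : ∀ f, 0 ≤ fc f)
    (hdc : ∀ i j, 0 ≤ dc i j) (hsym : ∀ i j, dc i j = dc j i)
    (s : A → Option F)
    (nbr : A → Option F)
    (hne : ∀ i, nbr i ≠ s i)
    (hopen : ∀ i f, nbr i = some f → ∃ j, s j = some f)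
    (fk : F) (hfk : ∃ i, s i = some fk)
    (hcost : (∑ i ∈ Finset.univ.filter (fun i => s i = some fk),
        (ct cc dc (Function.update s i (nbr i)) i - ct cc dc s i)) < fc fk) :
    PhiC fc cc dc (fun i => if s i = some fk then nbr i else s i) < PhiC fc cc dc s := by
  have hne' : ∀ i, s i = some fk → nbr i ≠ some fk := fun i hi => hi ▸ hne i
  have hfcost := fcost_relocate_add_le fc hfc hne' hopen hfk
  have hPhi0 := Phi0_relocate_le dc cc hdc hsym hne'
  rw [PhiC, PhiC]
  change fcost fc (relocate s fk nbr) + Phi0 cc dc (relocate s fk nbr) < _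
  linarith

/-- closing a facility `fk` that cannot be paid for decreases the potential.
Suppose every agent is stable ignoring facility costs, each `nBR i` is a best alternative
strategy to `s i` using no facility closed in `s`, `fk` is open, and
`c(fk) > Σ_{i : s_i = fk} Q_i(s)` where `Q_i(s) = c̃_i(nBR_i(s), s_{-i}) − c̃_i(s)`.
Letting every agent at `fk` simultaneously switch to its `nBR` yields `s'` with
`Φ(s') < Φ(s)`. -/
theorem closing_decreases_potential [Fintype A] [Fintype F] [DecidableEq A]
    (fc : F → ℝ) (cc : A → Option F → ℝ) (dc : A → A → ℝ)
    (hfc : ∀ f, 0 ≤ fc f) (hcc : ∀ i o, 0 ≤ cc i o)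
    (hdc : ∀ i j, 0 ≤ dc i j) (hsym : ∀ i j, dc i j = dc j i)
    (s : A → Option F)
    (hstab : ∀ i s', ct cc dc s i ≤ ct cc dc (Function.update s i s') i)
    (nbr : A → Option F)
    (hne : ∀ i, nbr i ≠ s i)
    (hmin : ∀ i s', s' ≠ s i →
      ct cc dc (Function.update s i (nbr i)) i ≤ ct cc dc (Function.update s i s') i)
    (hopen : ∀ i f, nbr i = some f → ∃ j, s j = some f)
    (fk : F) (hfk : ∃ i, s i = some fk)
    (hcost : (∑ i ∈ Finset.univ.filter (fun i => s i = some fk),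
        (ct cc dc (Function.update s i (nbr i)) i - ct cc dc s i)) < fc fk) :
    PhiC fc cc dc (fun i => if s i = some fk then nbr i else s i) < PhiC fc cc dc s :=
  closing_decreases_potential_general fc cc dc hfc hdc hsym s nbr hne hopen fk hfk hcost
end

section
/- Tradeoff lemma for payments: fix τ ≥ 2 and let s* minimize social cost. Let Δ = Σ_i (c̃_i(s*) − c̃_i(b^i)), where b^i = (b_i, s*_{-i}) and b_i minimizes c̃_i(·, s*_{-i}). Suppose there exists an assignment s with Σ_i c̃_i(b^i) ≥ (2/τ)·Φ̃(s), and suppose there exists a stable state ŝ reachable with Φ(s) ≥ Φ(ŝ) ≥ (1/2)c(ŝ). Then Δ/c(s*) ≤ 1 − (1/τ)·(c(ŝ)/c(s*)). -/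
open Finset
open scoped Classical

variable {A F : Type*}

/-- A state `(s, γ)` is stable: prices are nonnegative, only paid at a used facility,
budget balanced (each open facility's cost is exactly covered), and no agent can
strictly decrease its total cost by deviating (anticipating price 0 elsewhere). -/
def Stable [Fintype A] [Fintype F] [DecidableEq A] (fc : F → ℝ) (cc : A → Option F → ℝ)
    (dc : A → A → ℝ) (s : A → Option F) (γ : A → ℝ) : Prop :=
  (∀ i, 0 ≤ γ i) ∧ (∀ i, s i = none → γ i = 0) ∧
    (∀ f, (∃ i, s i = some f) →
      ∑ i ∈ Finset.univ.filter (fun i => s i = some f), γ i = fc f) ∧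
    (∀ i s', s' ≠ s i →
      ct cc dc s i + γ i ≤ ct cc dc (Function.update s i s') i)

/- The argument is bookkeeping: `c(s*) − Δ = Σ_{open f in s*} c(f) + Σ_i c̃_i(bⁱ)`,
and since `s` opens no facility beyond those of `s*`, the hypothesis on `s` gives
`τ (c(s*) − Δ) ≥ 2 Φ(s) ≥ 2 Φ(ŝ) ≥ c(ŝ)`. Dividing by `c(s*) ≥ 0` yields the claim. -/

theorem tradeoff_ratio_le {K : Type*} [Field K] [LinearOrder K] [IsStrictOrderedRing K]
    {τ c ĉ Δ : K} (hτ : 0 < τ) (hc : 0 ≤ c) (h : ĉ ≤ τ * (c - Δ)) :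
    Δ / c ≤ 1 - 1 / τ * (ĉ / c) := by
  have hĉ : 1 / τ * ĉ ≤ c - Δ := by
    rw [one_div_mul_eq_div, div_le_iff₀ hτ]
    linarith
  rw [← mul_div_assoc, le_sub_iff_add_le, ← add_div]
  exact div_le_one_of_le₀ (by linarith) hc

section FacilityGame

variable {fc : F → ℝ} {cc : A → Option F → ℝ} {dc : A → A → ℝ}

theorem soc_eq_sum_ct [Fintype A] (s : A → Option F) : soc cc dc s = ∑ i, ct cc dc s i := by
  simp only [soc, ct, Finset.sum_add_distrib]

theorem fcost_nonneg [Fintype F] (hfc : ∀ f, 0 ≤ fc f) (s : A → Option F) : 0 ≤ fcost fc s :=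
  Finset.sum_nonneg fun f _ => hfc f

theorem ct_nonneg [Fintype A] (hcc : ∀ i o, 0 ≤ cc i o) (hdc : ∀ i j, 0 ≤ dc i j)
    (s : A → Option F) (i : A) : 0 ≤ ct cc dc s i :=
  add_nonneg (hcc _ _) (Finset.sum_nonneg fun j _ => hdc i j)

theorem socC_nonneg [Fintype A] [Fintype F] (hfc : ∀ f, 0 ≤ fc f) (hcc : ∀ i o, 0 ≤ cc i o)
    (hdc : ∀ i j, 0 ≤ dc i j) (s : A → Option F) : 0 ≤ socC fc cc dc s := by
  rw [socC, soc_eq_sum_ct]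
  exact add_nonneg (fcost_nonneg hfc s) (Finset.sum_nonneg fun i _ => ct_nonneg hcc hdc s i)

theorem socC_sub_sum_sub_ct [Fintype A] [Fintype F] (s : A → Option F) (t : A → A → Option F) :
    socC fc cc dc s - ∑ i, (ct cc dc s i - ct cc dc (t i) i)
      = fcost fc s + ∑ i, ct cc dc (t i) i := by
  rw [socC, soc_eq_sum_ct, Finset.sum_sub_distrib]
  ring

theorem two_mul_PhiC_le [Fintype A] [Fintype F] {τ X : ℝ} {s s' : A → Option F} (hτ : 2 ≤ τ)
    (hfc : ∀ f, 0 ≤ fc f) (hs : 2 / τ * Phi0 cc dc s ≤ X) (hsf : fcost fc s ≤ fcost fc s') :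
    2 * PhiC fc cc dc s ≤ τ * (fcost fc s' + X) := by
  have hτ0 : 0 < τ := by linarith
  have hPhi0 : 2 * Phi0 cc dc s ≤ τ * X := by
    rwa [div_mul_eq_mul_div, div_le_iff₀ hτ0, mul_comm X] at hs
  have hfs : 2 * fcost fc s ≤ τ * fcost fc s' :=
    calc 2 * fcost fc s ≤ τ * fcost fc s := by
          gcongr
          exact fcost_nonneg hfc s
      _ ≤ τ * fcost fc s' := by gcongr
  rw [PhiC]
  linarith

end FacilityGame

theorem payment_tradeoff_lemma_general [Fintype A] [Fintype F] [DecidableEq A]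
    (fc : F → ℝ) (cc : A → Option F → ℝ) (dc : A → A → ℝ)
    (hfc : ∀ f, 0 ≤ fc f) (hcc : ∀ i o, 0 ≤ cc i o)
    (hdc : ∀ i j, 0 ≤ dc i j)
    (τ : ℝ) (hτ : 2 ≤ τ)
    (sstar : A → Option F)
    (b : A → Option F)
    (s : A → Option F)
    (hs : (2 / τ) * Phi0 cc dc s ≤ ∑ i, ct cc dc (Function.update sstar i (b i)) i)
    (hsf : fcost fc s ≤ fcost fc sstar)
    (shat : A → Option F)
    (h1 : PhiC fc cc dc shat ≤ PhiC fc cc dc s)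
    (h2 : (1 / 2) * socC fc cc dc shat ≤ PhiC fc cc dc shat) :
    (∑ i, (ct cc dc sstar i - ct cc dc (Function.update sstar i (b i)) i))
        / socC fc cc dc sstar
      ≤ 1 - (1 / τ) * (socC fc cc dc shat / socC fc cc dc sstar) := by
  refine tradeoff_ratio_le (by linarith) (socC_nonneg hfc hcc hdc sstar) ?_
  rw [socC_sub_sum_sub_ct]
  linarith [two_mul_PhiC_le hτ hfc hs hsf]

/-- tradeoff lemma: let `τ ≥ 2`, `s*` minimize social cost, `b i` be a best
response of agent `i` against `s*_{-i}`, and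
`Δ = Σ_i (c̃_i(s*) − c̃_i(b^i))` with `b^i = (b_i, s*_{-i})`.  If some assignment `s`
(opening no facility beyond those open in `s*`) satisfies `Σ_i c̃_i(b^i) ≥ (2/τ)·Φ̃(s)`,
and a stable state `(ŝ, γ)` satisfies `Φ(s) ≥ Φ(ŝ) ≥ (1/2)·c(ŝ)`, then
`Δ/c(s*) ≤ 1 − (1/τ)·(c(ŝ)/c(s*))`. -/
theorem payment_tradeoff_lemma [Fintype A] [Fintype F] [DecidableEq A]
    (fc : F → ℝ) (cc : A → Option F → ℝ) (dc : A → A → ℝ)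
    (hfc : ∀ f, 0 ≤ fc f) (hcc : ∀ i o, 0 ≤ cc i o)
    (hdc : ∀ i j, 0 ≤ dc i j) (hsym : ∀ i j, dc i j = dc j i)
    (τ : ℝ) (hτ : 2 ≤ τ)
    (sstar : A → Option F) (hopt : ∀ s, socC fc cc dc sstar ≤ socC fc cc dc s)
    (b : A → Option F)
    (hb : ∀ i s', ct cc dc (Function.update sstar i (b i)) i
      ≤ ct cc dc (Function.update sstar i s') i)
    (s : A → Option F)
    (hs : (2 / τ) * Phi0 cc dc s ≤ ∑ i, ct cc dc (Function.update sstar i (b i)) i)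
    (hsf : fcost fc s ≤ fcost fc sstar)
    (shat : A → Option F) (γ : A → ℝ) (hstable : Stable fc cc dc shat γ)
    (h1 : PhiC fc cc dc shat ≤ PhiC fc cc dc s)
    (h2 : (1 / 2) * socC fc cc dc shat ≤ PhiC fc cc dc shat) :
    (∑ i, (ct cc dc sstar i - ct cc dc (Function.update sstar i (b i)) i))
        / socC fc cc dc sstar
      ≤ 1 - (1 / τ) * (socC fc cc dc shat / socC fc cc dc sstar) :=
  payment_tradeoff_lemma_general fc cc dc hfc hcc hdc τ hτ sstar b s hs hsf shat h1 h2
end
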